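/- Let d ≥ 2 and let (v,M), (v',M') ∈ ℂ^d ⊕ so(d,ℂ) both satisfy: v_j = 0 for 1 ≤ j ≤ d−1, v_d ≠ 0, M_{j,j+1} ≠ 0 for all 1 ≤ j ≤ d−1, and M_{j,k} = 0 for all k > j+1 (and likewise for (v',M')). Then there exists a diagonal matrix D with diagonal entries in {−1,1} such that D v = v' and D M D = M' if and only if (v_d)² = (v'_d)² and (M_{j,j+1})² = (M'_{j,j+1})² for all 1 ≤ j ≤ d−1. (The squared coordinates c_d², c₁₂², …, c_{(d−1)d}² separate the orbits of W_d(ℂ) on the generic part of the relative section.) -/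

import Mathlib

/-!
Conjugating by `D = diagonal ε` with `ε j = ±1` multiplies `v_j` by `ε j` and `M_{jk}` by
`ε j ε k`, so the squares are invariant. Conversely, `v'_last = τ v_last` and
`M'_{j,j+1} = σ_j M_{j,j+1}` for some signs `τ, σ_j`; the signs `ε_last = τ`,
`ε_j = σ_j ε_{j+1}` then match the superdiagonal and the last coordinate, and a skew-symmetric
matrix vanishing above its superdiagonal is determined by its superdiagonal.
-/

open Matrix

section Signs

variable {K : Type*}

theorem exists_sq_eq_one_eq_mul_of_sq_eq_sq [CommRing K] [NoZeroDivisors K] {x y : K}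
    (h : x ^ 2 = y ^ 2) : ∃ s : K, s ^ 2 = 1 ∧ y = s * x := by
  rcases sq_eq_sq_iff_eq_or_eq_neg.1 h.symm with rfl | rfl
  exacts [⟨1, one_pow 2, (one_mul y).symm⟩, ⟨-1, by simp, (neg_one_mul x).symm⟩]

theorem exists_sq_eq_one_seq_eq_mul_succ [CommMonoid K] {σ : ℕ → K} (hσ : ∀ n, σ n ^ 2 = 1)
    {τ : K} (hτ : τ ^ 2 = 1) (m : ℕ) :
    ∃ ε : ℕ → K, (∀ n, ε n ^ 2 = 1) ∧ ε m = τ ∧ ∀ n < m, ε n = σ n * ε (n + 1) := by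
  refine ⟨fun n => τ * ∏ i ∈ Finset.Ico n m, σ i, fun n => ?_, by simp, fun n hn => ?_⟩
  · simp only [mul_pow, ← Finset.prod_pow, hσ, hτ, Finset.prod_const_one, mul_one]
  · dsimp only
    rw [Finset.prod_eq_prod_Ico_succ_bot hn, mul_left_comm]

end Signs

namespace Matrix

variable {K n : Type*} [CommRing K]

theorem diagonal_mul_mul_diagonal_apply [Fintype n] [DecidableEq n] (ε : n → K)
    (M : Matrix n n K) (i j : n) : (diagonal ε * M * diagonal ε) i j = ε i * M i j * ε j := by
  rw [mul_diagonal, diagonal_mul]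

theorem exists_sq_eq_one_superdiag_eq_mul [NoZeroDivisors K] {d : ℕ}
    {M M' : Matrix (Fin d) (Fin d) K}
    (h : ∀ j k : Fin d, (k : ℕ) = j + 1 → M j k ^ 2 = M' j k ^ 2) :
    ∃ σ : ℕ → K, (∀ n, σ n ^ 2 = 1) ∧
      ∀ j k : Fin d, (k : ℕ) = j + 1 → M' j k = σ j * M j k := by
  have signs (n : ℕ) : ∃ s : K, s ^ 2 = 1 ∧
      ∀ j k : Fin d, (j : ℕ) = n → (k : ℕ) = n + 1 → M' j k = s * M j k := by
    by_cases hn : n + 1 < d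
    · obtain ⟨s, hs, hsM⟩ := exists_sq_eq_one_eq_mul_of_sq_eq_sq (h ⟨n, by omega⟩ ⟨n + 1, hn⟩ rfl)
      refine ⟨s, hs, fun j k hj hk => ?_⟩
      subst hj
      obtain rfl : k = ⟨j + 1, hn⟩ := Fin.ext hk
      exact hsM
    · exact ⟨1, one_pow 2, fun j k _ hk => absurd k.isLt (by omega)⟩
  choose σ hσ hσM using signs
  exact ⟨σ, hσ, fun j k hk => hσM j j k rfl hk⟩

theorem apply_self_eq_zero_of_transpose_eq_neg [NoZeroDivisors K] [CharZero K]
    {M : Matrix n n K} (hM : Mᵀ = -M) (i : n) : M i i = 0 :=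
  CharZero.eq_neg_self_iff.1 (congrFun (congrFun hM i) i)

theorem diagonal_mul_mul_diagonal_eq_of_superdiag [NoZeroDivisors K] [CharZero K] {d : ℕ}
    {M M' : Matrix (Fin d) (Fin d) K} (hM : Mᵀ = -M) (hM' : M'ᵀ = -M')
    (hM2 : ∀ j k : Fin d, (j : ℕ) + 1 < k → M j k = 0)
    (hM2' : ∀ j k : Fin d, (j : ℕ) + 1 < k → M' j k = 0) {ε : Fin d → K}
    (hε : ∀ j k : Fin d, (k : ℕ) = j + 1 → ε j * M j k * ε k = M' j k) :
    diagonal ε * M * diagonal ε = M' := by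
  have upper : ∀ j k : Fin d, j ≤ k → ε j * M j k * ε k = M' j k := by
    intro j k hjk
    rcases hjk.eq_or_lt with rfl | hlt
    · simp [apply_self_eq_zero_of_transpose_eq_neg hM,
        apply_self_eq_zero_of_transpose_eq_neg hM']
    rcases (Nat.succ_le_of_lt (Fin.lt_def.1 hlt)).eq_or_lt with h | h
    · exact hε j k h.symm
    · simp [hM2 j k h, hM2' j k h]
  ext j k
  rw [diagonal_mul_mul_diagonal_apply]
  rcases le_total j k with h | h
  · exact upper j k h
  · have hMjk : M j k = -M k j := congrFun (congrFun hM k) j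
    have hM'jk : M' j k = -M' k j := congrFun (congrFun hM' k) j
    rw [hMjk, hM'jk, ← upper k j h]
    ring

end Matrix

/-- the squared coordinates `c_d², c₁₂², …, c_{(d−1)d}²` separate the
orbits of `W_d(ℂ)` (diagonal sign matrices) on the generic part of the relative
section. (0-based indices.) -/
theorem stmt12 {d : ℕ} (hd : 2 ≤ d)
    (v v' : Fin d → ℂ) (M M' : Matrix (Fin d) (Fin d) ℂ)
    (hMskew : Mᵀ = -M) (hM'skew : M'ᵀ = -M')
    (hv1 : ∀ j : Fin d, (j : ℕ) + 1 < d → v j = 0)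
    (hM2 : ∀ j k : Fin d, (j : ℕ) + 1 < (k : ℕ) → M j k = 0)
    (hv1' : ∀ j : Fin d, (j : ℕ) + 1 < d → v' j = 0)
    (hM2' : ∀ j k : Fin d, (j : ℕ) + 1 < (k : ℕ) → M' j k = 0) :
    (∃ D : Matrix (Fin d) (Fin d) ℂ,
        (∀ j k : Fin d, j ≠ k → D j k = 0) ∧
        (∀ j : Fin d, D j j = 1 ∨ D j j = -1) ∧
        D.mulVec v = v' ∧ D * M * D = M') ↔
      ((v ⟨d - 1, by omega⟩) ^ 2 = (v' ⟨d - 1, by omega⟩) ^ 2 ∧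
       ∀ j k : Fin d, (k : ℕ) = (j : ℕ) + 1 → (M j k) ^ 2 = (M' j k) ^ 2) := by
  constructor
  · rintro ⟨D, hDoff, hDsign, rfl, rfl⟩
    have hsq (i : Fin d) : D i i ^ 2 = 1 := sq_eq_one_iff.2 (hDsign i)
    rw [← (isDiag_iff_diagonal_diag D).1 hDoff]
    exact ⟨by simp [mulVec_diagonal, mul_pow, hsq],
      fun j k _ => by simp [mul_pow, hsq]⟩
  · rintro ⟨hv, hM⟩
    obtain ⟨τ, hτ, hτv⟩ := exists_sq_eq_one_eq_mul_of_sq_eq_sq hv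
    obtain ⟨σ, hσ, hσM⟩ := exists_sq_eq_one_superdiag_eq_mul hM
    obtain ⟨ε, hε, hεlast, hεsucc⟩ := exists_sq_eq_one_seq_eq_mul_succ hσ hτ (d - 1)
    refine ⟨diagonal fun i => ε i, fun j k => diagonal_apply_ne _,
      fun j => by simpa using hε j, ?_, ?_⟩
    · ext i
      rw [mulVec_diagonal]
      by_cases hi : (i : ℕ) + 1 < d
      · rw [hv1 i hi, hv1' i hi, mul_zero]
      · have hi' : (i : ℕ) = d - 1 := by omega
        rw [show i = ⟨d - 1, by omega⟩ from Fin.ext hi', Fin.val_mk, hεlast, hτv]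
    · refine diagonal_mul_mul_diagonal_eq_of_superdiag hMskew hM'skew hM2 hM2' fun j k hk => ?_
      rw [hεsucc j (by omega), hσM j k hk, hk]
      linear_combination σ j * M j k * hε (j + 1)
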